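/- Let x ∈ I have continued fraction coefficients (a_j)_{j≥1}, let n ≥ 2 be even and let y ∈ I_n(x). Then |f_1(x) − f_1(y)| ≤ 1 / ( a_1² a_3² ⋯ a_{n-1}² ), i.e. |f_1(x) − f_1(y)| ≤ ∏_{j=1}^{n/2} a_{2j-1}^{-2}. -/

import Mathlib

open Filter Finset MeasureTheory

/-- `qden a n` is the denominator `q_n` of the continued fraction with partial
quotients `a_1 = a 0, a_2 = a 1, …` (0-indexed sequence `a`), defined by
`q_0 = 1`, `q_1 = a_1`, `q_n = a_n q_{n-1} + q_{n-2}`. -/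
def qden (a : ℕ → ℕ+) : ℕ → ℕ
  | 0 => 1
  | 1 => a 0
  | (n+2) => (a (n+1) : ℕ) * qden a (n+1) + qden a n

/-- `pnum a n` is the numerator `p_n`, defined by `p_0 = 0`, `p_1 = 1`,
`p_n = a_n p_{n-1} + p_{n-2}`. -/
def pnum (a : ℕ → ℕ+) : ℕ → ℕ
  | 0 => 0
  | 1 => 1
  | (n+2) => (a (n+1) : ℕ) * pnum a (n+1) + pnum a n

/-- The value `[a_1, a_2, …]` of the infinite continued fraction with partial quotients
`a_1 = a 0, a_2 = a 1, …`, i.e. the limit of the convergents `p_n / q_n` (which always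
exists). -/
noncomputable def cfVal (a : ℕ → ℕ+) : ℝ :=
  limUnder atTop (fun n => (pnum a n : ℝ) / (qden a n : ℝ))

/-- The set `I` of irrational numbers of `[0,1]`. -/
def Iirr : Set ℝ := {x | x ∈ Set.Icc (0:ℝ) 1 ∧ Irrational x}

/-- The fundamental interval `I_n(x)` of rank `n` for `x = [a_1, a_2, …]`: the set of those
irrationals `y = [b_1, b_2, …]` whose first `n` partial quotients agree with those of `x`. -/
def fundInt (a : ℕ → ℕ+) (n : ℕ) : Set ℝ :=
  {y | ∃ b : ℕ → ℕ+, cfVal b = y ∧ ∀ j < n, b j = a j}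

/-- The (unique) sequence of partial quotients of `x`, when `x` has a continued
fraction expansion. -/
noncomputable def coeff (x : ℝ) : ℕ → ℕ+ := by
  classical
  exact if h : ∃ a : ℕ → ℕ+, cfVal a = x then h.choose else fun _ => 1

/-- First component of Cantor's bijection: `f₁([a_1,a_2,…]) = [a_1,a_3,a_5,…]`. -/
noncomputable def cantorF1 (x : ℝ) : ℝ := cfVal (fun j => coeff x (2*j))

/-- Second component of Cantor's bijection: `f₂([a_1,a_2,…]) = [a_2,a_4,a_6,…]`. -/
noncomputable def cantorF2 (x : ℝ) : ℝ := cfVal (fun j => coeff x (2*j+1))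

/-!
The convergents `p_n / q_n` are the partial sums of the alternating series
`∑ (-1)^i / (q_i q_{i+1})`, so `[a]` lies between any two consecutive convergents.
If the first `m` partial quotients of `a` and `b` agree, then so do `p_k, q_k` for `k ≤ m`, and
both `[a]` and `[b]` lie between `p_m / q_m` and the mediant `(p_m + p_{m-1}) / (q_m + q_{m-1})`,
an interval of length `1 / (q_m (q_m + q_{m-1})) ≤ 1 / q_m²`. Since `q_m ≥ a_1 ⋯ a_m`, applying
this to the odd-indexed partial quotients of `x` and `y`, which agree up to `n / 2`, gives the
bound, once uniqueness of expansions identifies `coeff (cfVal a)` with `a`.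
-/

open Topology

noncomputable def convergent (a : ℕ → ℕ+) (n : ℕ) : ℝ := (pnum a n : ℝ) / (qden a n : ℝ)

noncomputable def mediant (a : ℕ → ℕ+) (k : ℕ) : ℝ :=
  ((pnum a (k+1) : ℝ) + pnum a k) / ((qden a (k+1) : ℝ) + qden a k)

section Recurrences

variable (a : ℕ → ℕ+)

lemma qden_pos : ∀ n, 0 < qden a n
  | 0 => Nat.one_pos
  | 1 => (a 0).pos
  | n+2 => by
      have := qden_pos n
      simp only [qden]
      positivity

lemma cast_qden_pos (n : ℕ) : (0:ℝ) < qden a n := by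
  exact_mod_cast qden_pos a n

lemma qden_add_le_qden_add_two (n : ℕ) : qden a (n+1) + qden a n ≤ qden a (n+2) := by
  have h : 1 ≤ (a (n+1) : ℕ) := (a (n+1)).pos
  rw [qden.eq_3]
  nlinarith

lemma qden_mono : Monotone (qden a) := by
  refine monotone_nat_of_le_succ fun
    | 0 => (a 0).pos
    | n+1 => le_of_add_le_left (qden_add_le_qden_add_two a n)

lemma succ_le_qden_mul_qden_succ : ∀ n, n + 1 ≤ qden a n * qden a (n+1)
  | 0 => by rw [qden, qden, one_mul]; exact (a 0).pos
  | n+1 => by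
      have ih := succ_le_qden_mul_qden_succ n
      have hq := qden_add_le_qden_add_two a n
      have h1 : 1 ≤ qden a (n+1) := qden_pos a (n+1)
      nlinarith

lemma prod_le_qden : ∀ m, ∏ j ∈ range m, (a j : ℕ) ≤ qden a m
  | 0 => le_rfl
  | 1 => by simp [qden]
  | m+2 => by
      rw [prod_range_succ, mul_comm]
      exact (Nat.mul_le_mul_left _ (prod_le_qden (m+1))).trans (Nat.le_add_right _ _)

lemma pnum_mul_qden_sub_pnum_mul_qden :
    ∀ n, (pnum a (n+1) : ℤ) * qden a n - (pnum a n : ℤ) * qden a (n+1) = (-1)^n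
  | 0 => by simp [pnum, qden]
  | n+1 => by
      have ih := pnum_mul_qden_sub_pnum_mul_qden n
      simp only [pnum, qden]
      push_cast
      linear_combination (-1 : ℤ) * ih

lemma pnum_succ_eq_qden_tail : ∀ n, pnum a (n+1) = qden (fun j => a (j+1)) n
  | 0 => rfl
  | 1 => by simp [pnum, qden]
  | n+2 => by
      rw [pnum.eq_3, pnum_succ_eq_qden_tail n, pnum_succ_eq_qden_tail (n+1)]
      rfl

lemma qden_succ_eq_qden_tail_add_pnum_tail : ∀ n,
    qden a (n+1) = (a 0 : ℕ) * qden (fun j => a (j+1)) n + pnum (fun j => a (j+1)) n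
  | 0 => by simp [pnum, qden]
  | 1 => by simp [pnum, qden]; ring
  | n+2 => by
      rw [qden.eq_3, qden_succ_eq_qden_tail_add_pnum_tail n,
        qden_succ_eq_qden_tail_add_pnum_tail (n+1), qden.eq_3, pnum.eq_3]
      ring

end Recurrences

lemma pnum_congr {a b : ℕ → ℕ+} {m : ℕ} (h : ∀ j < m, a j = b j) :
    ∀ k ≤ m, pnum a k = pnum b k
  | 0, _ => rfl
  | 1, _ => rfl
  | k+2, hk => by
      simp only [pnum, h (k+1) (by omega), pnum_congr h k (by omega),
        pnum_congr h (k+1) (by omega)]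

lemma qden_congr {a b : ℕ → ℕ+} {m : ℕ} (h : ∀ j < m, a j = b j) :
    ∀ k ≤ m, qden a k = qden b k
  | 0, _ => rfl
  | 1, hk => by simp [qden, h 0 (by omega)]
  | k+2, hk => by
      simp only [qden, h (k+1) (by omega), qden_congr h k (by omega),
        qden_congr h (k+1) (by omega)]

section Convergents

variable (a : ℕ → ℕ+)

lemma convergent_succ_sub_convergent (n : ℕ) :
    convergent a (n+1) - convergent a n = (-1)^n / ((qden a n : ℝ) * qden a (n+1)) := by
  have h0 := cast_qden_pos a n
  have h1 := cast_qden_pos a (n+1)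
  have hd : (pnum a (n+1) : ℝ) * qden a n - (pnum a n : ℝ) * qden a (n+1) = (-1)^n := by
    exact_mod_cast pnum_mul_qden_sub_pnum_mul_qden a n
  rw [convergent, convergent, div_sub_div _ _ h1.ne' h0.ne', ← hd]
  ring

lemma convergent_eq_sum (n : ℕ) :
    convergent a n = ∑ i ∈ range n, (-1)^i * (1 / ((qden a i : ℝ) * qden a (i+1))) := by
  induction n with
  | zero => simp [convergent, pnum]
  | succ n ih =>
      rw [sum_range_succ, ← ih, ← sub_eq_iff_eq_add', convergent_succ_sub_convergent]
      ring

lemma antitone_one_div_qden_mul_qden_succ :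
    Antitone fun n => 1 / ((qden a n : ℝ) * qden a (n+1)) := by
  intro m n hmn
  have := cast_qden_pos a m
  have := cast_qden_pos a (m+1)
  apply one_div_le_one_div_of_le (by positivity)
  exact_mod_cast Nat.mul_le_mul (qden_mono a hmn) (qden_mono a (by omega : m+1 ≤ n+1))

lemma tendsto_one_div_qden_mul_qden_succ :
    Tendsto (fun n => 1 / ((qden a n : ℝ) * qden a (n+1))) atTop (𝓝 0) := by
  refine squeeze_zero (fun n => by positivity) (fun n => ?_)
    tendsto_one_div_add_atTop_nhds_zero_nat
  apply one_div_le_one_div_of_le (by positivity)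
  exact_mod_cast succ_le_qden_mul_qden_succ a n

lemma tendsto_convergent : Tendsto (convergent a) atTop (𝓝 (cfVal a)) := by
  obtain ⟨l, hl⟩ :=
    (antitone_one_div_qden_mul_qden_succ a).tendsto_alternating_series_of_tendsto_zero
      (tendsto_one_div_qden_mul_qden_succ a)
  rw [← funext (convergent_eq_sum a)] at hl
  rwa [show cfVal a = limUnder atTop (convergent a) from rfl, hl.limUnder_eq]

lemma cfVal_mem_uIcc_convergent (n : ℕ) :
    cfVal a ∈ Set.uIcc (convergent a n) (convergent a (n+1)) := by
  have hl := tendsto_convergent a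
  rw [funext (convergent_eq_sum a)] at hl
  simp only [convergent_eq_sum]
  have hf := antitone_one_div_qden_mul_qden_succ a
  obtain ⟨k, rfl | rfl⟩ := Nat.even_or_odd' n
  · exact Set.mem_uIcc_of_le (hf.alternating_series_le_tendsto hl k)
      (hf.tendsto_le_alternating_series hl k)
  · refine Set.mem_uIcc_of_ge ?_ (hf.tendsto_le_alternating_series hl k)
    simpa only [mul_add] using hf.alternating_series_le_tendsto hl (k+1)

end Convergents

section Uniqueness

variable (a : ℕ → ℕ+)

lemma cfVal_nonneg : 0 ≤ cfVal a :=
  ge_of_tendsto' (tendsto_convergent a) fun n => by unfold convergent; positivity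

lemma convergent_succ_eq (n : ℕ) :
    convergent a (n+1) = 1 / ((a 0 : ℝ) + convergent (fun j => a (j+1)) n) := by
  have hq := cast_qden_pos (fun j => a (j+1)) n
  rw [convergent, convergent, pnum_succ_eq_qden_tail, qden_succ_eq_qden_tail_add_pnum_tail]
  push_cast
  field_simp

lemma cfVal_eq_one_div_add_cfVal_tail : cfVal a = 1 / ((a 0 : ℝ) + cfVal (fun j => a (j+1))) := by
  have hne : (a 0 : ℝ) + cfVal (fun j => a (j+1)) ≠ 0 := by
    have := cfVal_nonneg (fun j => a (j+1))
    positivity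
  refine tendsto_nhds_unique ((tendsto_convergent a).comp (tendsto_add_atTop_nat 1)) ?_
  simp only [Function.comp_def, convergent_succ_eq]
  exact tendsto_const_nhds.div (tendsto_const_nhds.add (tendsto_convergent _)) hne

lemma cfVal_pos : 0 < cfVal a := by
  rw [cfVal_eq_one_div_add_cfVal_tail]
  have := cfVal_nonneg (fun j => a (j+1))
  positivity

lemma cfVal_lt_one : cfVal a < 1 := by
  have := cfVal_pos (fun j => a (j+1))
  have : (1:ℝ) ≤ (a 0 : ℝ) := by exact_mod_cast (a 0).pos
  rw [cfVal_eq_one_div_add_cfVal_tail, div_lt_one (by positivity)]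
  linarith

end Uniqueness

lemma head_eq_and_cfVal_tail_eq_of_cfVal_eq {a b : ℕ → ℕ+} (h : cfVal a = cfVal b) :
    a 0 = b 0 ∧ cfVal (fun j => a (j+1)) = cfVal (fun j => b (j+1)) := by
  rw [cfVal_eq_one_div_add_cfVal_tail a, cfVal_eq_one_div_add_cfVal_tail b, one_div, one_div,
    inv_inj] at h
  have := cfVal_pos (fun j => a (j+1))
  have := cfVal_lt_one (fun j => a (j+1))
  have := cfVal_pos (fun j => b (j+1))
  have := cfVal_lt_one (fun j => b (j+1))
  have hab : (a 0 : ℕ) < (b 0 : ℕ) + 1 := (Nat.cast_lt (α := ℝ)).1 (by push_cast; linarith)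
  have hba : (b 0 : ℕ) < (a 0 : ℕ) + 1 := (Nat.cast_lt (α := ℝ)).1 (by push_cast; linarith)
  have h0 : a 0 = b 0 := PNat.coe_injective (by omega)
  refine ⟨h0, ?_⟩
  rw [h0] at h
  exact add_left_cancel h

lemma cfVal_injective : Function.Injective cfVal := by
  suffices ∀ n (a b : ℕ → ℕ+), cfVal a = cfVal b → a n = b n from
    fun a b h => funext fun n => this n a b h
  intro n
  induction n with
  | zero => exact fun a b h => (head_eq_and_cfVal_tail_eq_of_cfVal_eq h).1
  | succ n ih => exact fun a b h => ih _ _ (head_eq_and_cfVal_tail_eq_of_cfVal_eq h).2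

lemma coeff_cfVal (a : ℕ → ℕ+) : coeff (cfVal a) = a := by
  have hex : ∃ b : ℕ → ℕ+, cfVal b = cfVal a := ⟨a, rfl⟩
  rw [coeff, dif_pos hex]
  exact cfVal_injective hex.choose_spec

lemma mediant_sub_convergent (a : ℕ → ℕ+) (k : ℕ) :
    mediant a k - convergent a (k+1) =
      (-1)^(k+1) / ((qden a (k+1) : ℝ) * ((qden a (k+1) : ℝ) + qden a k)) := by
  have hd : (pnum a (k+1) : ℝ) * qden a k - (pnum a k : ℝ) * qden a (k+1) = (-1)^k := by
    exact_mod_cast pnum_mul_qden_sub_pnum_mul_qden a k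
  have h0 := cast_qden_pos a k
  have h1 := cast_qden_pos a (k+1)
  rw [mediant, convergent, pow_succ]
  field_simp
  linear_combination (-1 : ℝ) * hd

lemma cfVal_mem_uIcc_mediant (a : ℕ → ℕ+) (k : ℕ) :
    cfVal a ∈ Set.uIcc (convergent a (k+1)) (mediant a k) := by
  have h0 := cast_qden_pos a k
  have h1 := cast_qden_pos a (k+1)
  have h2 := cast_qden_pos a (k+2)
  have hc : ((qden a (k+1) : ℝ) + qden a k) / qden a (k+2) ∈ Set.Icc (0:ℝ) 1 := by
    refine ⟨by positivity, (div_le_one h2).2 ?_⟩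
    exact_mod_cast qden_add_le_qden_add_two a k
  -- `p_{k+2} = (a_{k+1} - 1) p_{k+1} + (p_{k+1} + p_k)`, and likewise for `q_{k+2}`
  have hconv : convergent a (k+2) = convergent a (k+1) + (((qden a (k+1) : ℝ) + qden a k) /
      qden a (k+2)) • (mediant a k - convergent a (k+1)) := by
    rw [smul_eq_mul, mediant_sub_convergent, ← sub_eq_iff_eq_add', convergent_succ_sub_convergent]
    field_simp
  refine Set.uIcc_subset_uIcc Set.left_mem_uIcc ?_ (cfVal_mem_uIcc_convergent a (k+1))
  rw [hconv]
  exact (convex_uIcc _ _).add_smul_sub_mem Set.left_mem_uIcc Set.right_mem_uIcc hc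

lemma abs_cfVal_sub_cfVal_le {a b : ℕ → ℕ+} {m : ℕ} (h : ∀ j < m, a j = b j) :
    |cfVal a - cfVal b| ≤ 1 / (qden a m : ℝ)^2 := by
  cases m with
  | zero =>
      have := cfVal_pos a
      have := cfVal_lt_one a
      have := cfVal_pos b
      have := cfVal_lt_one b
      rw [qden, abs_sub_le_iff]
      constructor <;> norm_num <;> linarith
  | succ k =>
      have hconv : convergent b (k+1) = convergent a (k+1) := by
        rw [convergent, convergent, pnum_congr h _ le_rfl, qden_congr h _ le_rfl]
      have hmed : mediant b k = mediant a k := by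
        rw [mediant, mediant, pnum_congr h _ le_rfl, qden_congr h _ le_rfl,
          pnum_congr h k (by omega), qden_congr h k (by omega)]
      have hb := cfVal_mem_uIcc_mediant b k
      rw [hconv, hmed] at hb
      have h0 := cast_qden_pos a k
      have h1 := cast_qden_pos a (k+1)
      calc |cfVal a - cfVal b|
          ≤ |mediant a k - convergent a (k+1)| :=
            Set.abs_sub_le_of_uIcc_subset_uIcc <|
              Set.uIcc_subset_uIcc hb (cfVal_mem_uIcc_mediant a k)
        _ = 1 / ((qden a (k+1) : ℝ) * ((qden a (k+1) : ℝ) + qden a k)) := by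
            rw [mediant_sub_convergent, abs_div, abs_pow, abs_neg, abs_one, one_pow,
              abs_of_pos (by positivity)]
        _ ≤ 1 / (qden a (k+1) : ℝ)^2 := by
            gcongr
            rw [sq]
            gcongr
            linarith

theorem abs_cantorF1_sub_le_general (a : ℕ → ℕ+) (x : ℝ) (hxa : cfVal a = x)
    (n : ℕ) (y : ℝ) (hy : y ∈ fundInt a n) :
    |cantorF1 x - cantorF1 y| ≤ 1 / ∏ j ∈ Finset.range (n / 2), ((a (2*j) : ℝ)) ^ 2 := by
  obtain ⟨b, rfl, hba⟩ := hy
  subst hxa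
  rw [cantorF1, cantorF1, coeff_cfVal, coeff_cfVal]
  have hodd : ∀ j < n / 2, a (2*j) = b (2*j) := fun j hj => (hba (2*j) (by omega)).symm
  refine (abs_cfVal_sub_cfVal_le hodd).trans ?_
  have hprod : ∏ j ∈ range (n / 2), ((a (2*j) : ℕ) : ℝ) ≤ qden (fun j => a (2*j)) (n / 2) := by
    exact_mod_cast prod_le_qden (fun j => a (2*j)) (n / 2)
  rw [prod_pow]
  gcongr

/-- If `x ∈ I` has partial quotients `a`, `n ≥ 2` is even, and `y ∈ I_n(x)`, then
`|f₁(x) − f₁(y)| ≤ 1 / (a_1² a_3² ⋯ a_{n-1}²) = ∏_{j=1}^{n/2} a_{2j-1}^{-2}`. -/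
theorem abs_cantorF1_sub_le (a : ℕ → ℕ+) (x : ℝ) (hx : x ∈ Iirr) (hxa : cfVal a = x)
    (n : ℕ) (hn : 2 ≤ n) (hne : Even n) (y : ℝ) (hy : y ∈ fundInt a n) :
    |cantorF1 x - cantorF1 y| ≤ 1 / ∏ j ∈ Finset.range (n / 2), ((a (2*j) : ℝ)) ^ 2 :=
  abs_cantorF1_sub_le_general a x hxa n y hy
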